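/- arXiv:2603.29415 — 4 statements merged into one kernel-verified Lean document; each statement's English description precedes it below -/
import Mathlib

section
/- Let (E,B) be a measurable space, n ≥ 1, and T a set of measurable functions from E to [−1,1] that is separable in the product topology on [−1,1]^E. Let ξ = (ξ_1,…,ξ_n) be an exchangeable random vector in ℝ^n with κ = E[|ξ_1|] < ∞ and ξ_1 + ⋯ + ξ_n = 0 almost surely. Define ḡ(x) = E[ sup_{t∈T} Σ_{i=1}^n ξ_i t(x_i) ] for x = (x_1,…,x_n) ∈ E^n. Then the function ḡ / (κ(3 − 2/n)) : E^n → ℝ is (2,0)-self-bounding. -/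
/-!
Write `S_x(v) = sup_{t ∈ T} ∑ᵢ vᵢ t(xᵢ)`, so that `ḡ(x) = E S_x(ξ)`; `S_x` is sublinear and
`S_x v ≤ S_x w + ‖v - w‖₁`. Let `ξ⁽ⁱ⁾` be `ξ` with its `i`-th weight removed and spread evenly over
the other coordinates, and `gᵢ(x) = E S_x(ξ⁽ⁱ⁾)`, which does not depend on `xᵢ`. Then
* `ḡ ≤ gᵢ + 2κ`, since `‖ξ - ξ⁽ⁱ⁾‖₁ = 2|ξᵢ|`;
* `gᵢ ≤ n/(n-1) ḡ`, since on `∑ ξ = 0` we have `ξ⁽ⁱ⁾ = (n-1)⁻¹ ∑ₖ ξ ∘ (i k)` and each `ξ ∘ (i k)`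
  has the law of `ξ`;
* `∑ᵢ gᵢ ≥ n(n-2)/(n-1) ḡ`, since on `∑ ξ = 0` we have `∑ᵢ ξ⁽ⁱ⁾ = n(n-2)/(n-1) ξ`;
* `ḡ ≤ nκ`.
These four inequalities say exactly that `((n-1)/n) gᵢ / (κ(3 - 2/n))` witness the
`(2,0)`-self-bounding property of `ḡ / (κ(3 - 2/n))`.
-/

open MeasureTheory

/-- A function `f : Eⁿ → ℝ` is `(a,b)`-self-bounding if for every coordinate `i` there is a
function `gᵢ` not depending on the `i`-th coordinate such that `0 ≤ f x − gᵢ x ≤ 1` for all `x`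
and `∑ i (f x − gᵢ x) ≤ a f x + b`. -/
def SelfBounding {E : Type*} {n : ℕ} (a b : ℝ) (f : (Fin n → E) → ℝ) : Prop :=
  ∃ g : Fin n → (Fin n → E) → ℝ,
    (∀ i, ∀ x y : Fin n → E, (∀ j, j ≠ i → x j = y j) → g i x = g i y) ∧
    (∀ i, ∀ x, 0 ≤ f x - g i x ∧ f x - g i x ≤ 1) ∧
    (∀ x, ∑ i, (f x - g i x) ≤ a * f x + b)

open Finset

noncomputable def supPairing {τ ι : Type*} [Fintype ι] (u : τ → ι → ℝ) (v : ι → ℝ) : ℝ :=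
  ⨆ t, ∑ i, v i * u t i

section supPairing

variable {τ ι : Type*} [Fintype ι] {u : τ → ι → ℝ}

lemma sum_mul_le_sum_abs_of_abs_le_one (hu : ∀ t i, |u t i| ≤ 1) (v : ι → ℝ) (t : τ) :
    ∑ i, v i * u t i ≤ ∑ i, |v i| :=
  sum_le_sum fun i _ => (le_abs_self _).trans <| by
    rw [abs_mul]; exact mul_le_of_le_one_right (abs_nonneg _) (hu t i)

lemma sum_mul_le_supPairing (hu : ∀ t i, |u t i| ≤ 1) (v : ι → ℝ) (t : τ) :
    ∑ i, v i * u t i ≤ supPairing u v :=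
  le_ciSup ⟨∑ i, |v i|, Set.forall_mem_range.2 (sum_mul_le_sum_abs_of_abs_le_one hu v)⟩ t

lemma supPairing_smul {c : ℝ} (hc : 0 ≤ c) (v : ι → ℝ) :
    supPairing u (c • v) = c * supPairing u v := by
  simp only [supPairing, Real.mul_iSup_of_nonneg hc, Pi.smul_apply, smul_eq_mul, mul_sum,
    mul_assoc]

lemma supPairing_congr {u' : τ → ι → ℝ} {v : ι → ℝ} {i : ι} (hv : v i = 0)
    (h : ∀ t j, j ≠ i → u t j = u' t j) : supPairing u v = supPairing u' v :=
  iSup_congr fun t => sum_congr rfl fun j _ => by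
    rcases eq_or_ne j i with rfl | hj
    · simp [hv]
    · rw [h t j hj]

variable [Nonempty τ]

lemma supPairing_le_sum_abs (hu : ∀ t i, |u t i| ≤ 1) (v : ι → ℝ) :
    supPairing u v ≤ ∑ i, |v i| :=
  ciSup_le (sum_mul_le_sum_abs_of_abs_le_one hu v)

lemma abs_supPairing_le (hu : ∀ t i, |u t i| ≤ 1) (v : ι → ℝ) :
    |supPairing u v| ≤ ∑ i, |v i| := by
  refine abs_le.2 ⟨?_, supPairing_le_sum_abs hu v⟩
  obtain ⟨t⟩ := ‹Nonempty τ›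
  have := sum_mul_le_sum_abs_of_abs_le_one hu (-v) t
  simp only [Pi.neg_apply, neg_mul, sum_neg_distrib, abs_neg] at this
  linarith [sum_mul_le_supPairing hu v t]

lemma supPairing_le_add_sum_abs_sub (hu : ∀ t i, |u t i| ≤ 1) (v w : ι → ℝ) :
    supPairing u v ≤ supPairing u w + ∑ i, |v i - w i| :=
  ciSup_le fun t => by
    have := sum_mul_le_sum_abs_of_abs_le_one hu (v - w) t
    simp only [Pi.sub_apply, sub_mul, sum_sub_distrib] at this
    linarith [sum_mul_le_supPairing hu w t]

lemma lipschitzWith_supPairing (hu : ∀ t i, |u t i| ≤ 1) :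
    LipschitzWith (Fintype.card ι) (supPairing u) :=
  LipschitzWith.of_le_add_mul _ fun v w => (supPairing_le_add_sum_abs_sub hu v w).trans <| by
    have : ∑ i, |v i - w i| ≤ ∑ _i : ι, dist v w := sum_le_sum fun i _ => by
      rw [← Real.dist_eq]; exact dist_le_pi_dist v w i
    simpa using this

lemma continuous_supPairing (hu : ∀ t i, |u t i| ≤ 1) : Continuous (supPairing u) :=
  (lipschitzWith_supPairing hu).continuous

lemma supPairing_zero : supPairing u 0 = 0 := by simp [supPairing]

lemma supPairing_add_le (hu : ∀ t i, |u t i| ≤ 1) (v w : ι → ℝ) :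
    supPairing u (v + w) ≤ supPairing u v + supPairing u w :=
  ciSup_le fun t => by
    simp only [Pi.add_apply, add_mul, sum_add_distrib]
    exact add_le_add (sum_mul_le_supPairing hu v t) (sum_mul_le_supPairing hu w t)

lemma supPairing_sum_le (hu : ∀ t i, |u t i| ≤ 1) {κ : Type*} (s : Finset κ)
    (w : κ → ι → ℝ) : supPairing u (∑ k ∈ s, w k) ≤ ∑ k ∈ s, supPairing u (w k) :=
  le_sum_of_subadditive _ supPairing_zero.le (supPairing_add_le hu) s w

lemma integrable_supPairing_comp (hu : ∀ t i, |u t i| ≤ 1) {Ω : Type*} [MeasurableSpace Ω]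
    {μ : Measure Ω} {W : Ω → ι → ℝ} (hW : Measurable W)
    (hWi : ∀ i, Integrable (fun ω => W ω i) μ) :
    Integrable (fun ω => supPairing u (W ω)) μ :=
  (integrable_finsetSum _ fun i _ => (hWi i).abs).mono'
    ((continuous_supPairing hu).comp_aestronglyMeasurable hW.aestronglyMeasurable)
    (ae_of_all _ fun ω => by simpa using abs_supPairing_le hu (W ω))

end supPairing

lemma Fin.sum_ite_eq_add_mul {R : Type*} [Ring R] {n : ℕ} (i : Fin n) (a b : R) :
    ∑ j, (if j = i then a else b) = a + (n - 1) * b := by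
  rw [Finset.sum_ite, filter_eq', filter_ne']
  simp [card_erase_of_mem, Nat.cast_pred i.pos]

lemma sub_one_pos_of_two_le {n : ℕ} (hn : 2 ≤ n) : (0 : ℝ) < n - 1 :=
  sub_pos.2 (Nat.one_lt_cast.2 hn)

noncomputable def redistribute {n : ℕ} (i : Fin n) (v : Fin n → ℝ) : Fin n → ℝ :=
  fun j => if j = i then 0 else v j + v i / ((n : ℝ) - 1)

section redistribute

variable {n : ℕ} {i j : Fin n} {v : Fin n → ℝ}

@[simp] lemma redistribute_self : redistribute i v i = 0 := if_pos rfl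

lemma redistribute_of_ne (h : j ≠ i) : redistribute i v j = v j + v i / ((n : ℝ) - 1) :=
  if_neg h

lemma continuous_redistribute (i : Fin n) : Continuous (redistribute i) :=
  continuous_pi fun j => by
    by_cases h : j = i <;> simp only [redistribute, h, if_true, if_false] <;> fun_prop

variable (hn : 2 ≤ n)
include hn

lemma sum_abs_sub_redistribute (i : Fin n) (v : Fin n → ℝ) :
    ∑ j, |v j - redistribute i v j| = 2 * |v i| := by
  have hterm : ∀ j,
      |v j - redistribute i v j| = if j = i then |v i| else |v i| / ((n : ℝ) - 1) := by
    intro j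
    rcases eq_or_ne j i with rfl | hj
    · simp
    · rw [redistribute_of_ne hj, if_neg hj, sub_add_cancel_left, abs_neg, abs_div,
        abs_of_pos (sub_one_pos_of_two_le hn)]
  rw [sum_congr rfl fun j _ => hterm j, Fin.sum_ite_eq_add_mul]
  field_simp [(sub_one_pos_of_two_le hn).ne']
  ring

lemma redistribute_eq_smul_sum_swap (hv : ∑ k, v k = 0) (i : Fin n) :
    redistribute i v = ((n : ℝ) - 1)⁻¹ • ∑ k, fun j => v (Equiv.swap i k j) := by
  funext j
  simp only [Pi.smul_apply, Finset.sum_apply, smul_eq_mul]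
  rcases eq_or_ne j i with rfl | hj
  · simp [hv]
  · have hswap : ∀ k, v (Equiv.swap i k j) = if k = j then v i else v j := by
      intro k
      rcases eq_or_ne k j with rfl | hk
      · simp
      · rw [Equiv.swap_apply_of_ne_of_ne hj hk.symm, if_neg hk]
    rw [redistribute_of_ne hj, sum_congr rfl fun k _ => hswap k, Fin.sum_ite_eq_add_mul]
    field_simp [(sub_one_pos_of_two_le hn).ne']
    ring

lemma sum_redistribute (hv : ∑ k, v k = 0) :
    ∑ i, redistribute i v = ((n : ℝ) * (n - 2) / (n - 1)) • v := by
  funext j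
  have hterm : ∀ i, redistribute i v j
      = v j + v i / ((n : ℝ) - 1) - if j = i then v j + v j / ((n : ℝ) - 1) else 0 := by
    intro i
    rcases eq_or_ne j i with rfl | h
    · simp
    · rw [redistribute_of_ne h, if_neg h, sub_zero]
  simp only [Finset.sum_apply, Pi.smul_apply, smul_eq_mul]
  rw [sum_congr rfl fun i _ => hterm i, sum_sub_distrib, sum_ite_eq, sum_add_distrib, ← sum_div,
    hv]
  simp only [sum_const, card_univ, Fintype.card_fin, nsmul_eq_mul, zero_div, add_zero, mem_univ,
    ↓reduceIte]
  field_simp [(sub_one_pos_of_two_le hn).ne']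
  ring

end redistribute

def Exchangeable {Ω ι α : Type*} [MeasurableSpace Ω] [MeasurableSpace α] (μ : Measure Ω)
    (ξ : Ω → ι → α) : Prop :=
  ∀ π : Equiv.Perm ι, μ.map (fun ω i => ξ ω (π i)) = μ.map ξ

namespace Exchangeable

variable {Ω ι α : Type*} [MeasurableSpace Ω] [MeasurableSpace α] {μ : Measure Ω}
  {ξ : Ω → ι → α}

lemma integral_comp_perm (h : Exchangeable μ ξ) (hξ : Measurable ξ) (π : Equiv.Perm ι)
    {F : (ι → α) → ℝ} (hF : Measurable F) :
    ∫ ω, F (fun i => ξ ω (π i)) ∂μ = ∫ ω, F (ξ ω) ∂μ := by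
  have hπ : Measurable fun ω i => ξ ω (π i) := by fun_prop
  rw [← integral_map hπ.aemeasurable hF.aestronglyMeasurable, h π,
    integral_map hξ.aemeasurable hF.aestronglyMeasurable]

variable [DecidableEq ι]

lemma integral_comp_apply (h : Exchangeable μ ξ) (hξ : Measurable ξ) (i j : ι) {f : α → ℝ}
    (hf : Measurable f) : ∫ ω, f (ξ ω j) ∂μ = ∫ ω, f (ξ ω i) ∂μ := by
  simpa using h.integral_comp_perm hξ (Equiv.swap i j) (hf.comp (measurable_pi_apply i))

lemma integrable_comp_apply (h : Exchangeable μ ξ) (hξ : Measurable ξ) (i j : ι) {f : α → ℝ}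
    (hf : Measurable f) (hi : Integrable (fun ω => f (ξ ω i)) μ) :
    Integrable (fun ω => f (ξ ω j)) μ := by
  have hF : Measurable fun v : ι → α => f (v i) := hf.comp (measurable_pi_apply i)
  have hπ : Measurable fun ω k => ξ ω (Equiv.swap i j k) := by fun_prop
  have hmap := (integrable_map_measure hF.aestronglyMeasurable hξ.aemeasurable).2 hi
  rw [← h (Equiv.swap i j)] at hmap
  simpa [Function.comp_def] using
    (integrable_map_measure hF.aestronglyMeasurable hπ.aemeasurable).1 hmap

end Exchangeable

section pointwise

variable {n : ℕ} {τ : Type*} [Nonempty τ] {u : τ → Fin n → ℝ}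
  (hn : 2 ≤ n) (hu : ∀ t i, |u t i| ≤ 1)
include hn hu

lemma supPairing_le_redistribute_add (i : Fin n) (v : Fin n → ℝ) :
    supPairing u v ≤ supPairing u (redistribute i v) + 2 * |v i| := by
  simpa [sum_abs_sub_redistribute hn] using supPairing_le_add_sum_abs_sub hu v (redistribute i v)

lemma supPairing_redistribute_le_sum_swap {v : Fin n → ℝ} (hv : ∑ k, v k = 0) (i : Fin n) :
    supPairing u (redistribute i v)
      ≤ ((n : ℝ) - 1)⁻¹ * ∑ k, supPairing u (fun j => v (Equiv.swap i k j)) := by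
  have hc : 0 ≤ ((n : ℝ) - 1)⁻¹ := inv_nonneg.2 (sub_one_pos_of_two_le hn).le
  rw [redistribute_eq_smul_sum_swap hn hv, supPairing_smul hc]
  exact mul_le_mul_of_nonneg_left (supPairing_sum_le hu _ _) hc

lemma mul_supPairing_le_sum_redistribute {v : Fin n → ℝ} (hv : ∑ k, v k = 0) :
    (n : ℝ) * (n - 2) / (n - 1) * supPairing u v ≤ ∑ i, supPairing u (redistribute i v) := by
  have hn' : (2 : ℝ) ≤ n := by exact_mod_cast hn
  rw [← supPairing_smul (div_nonneg (by nlinarith) (sub_one_pos_of_two_le hn).le),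
    ← sum_redistribute hn hv]
  exact supPairing_sum_le hu _ _

end pointwise

section integral

variable {Ω : Type*} [MeasurableSpace Ω] {μ : Measure Ω} {τ : Type*} [Nonempty τ]

lemma integral_supPairing_le_sum_integral_abs {ι : Type*} [Fintype ι] {u : τ → ι → ℝ}
    (hu : ∀ t i, |u t i| ≤ 1) {ξ : Ω → ι → ℝ} (hξ : Measurable ξ)
    (hint : ∀ i, Integrable (fun ω => ξ ω i) μ) :
    ∫ ω, supPairing u (ξ ω) ∂μ ≤ ∑ i, ∫ ω, |ξ ω i| ∂μ := by
  rw [← integral_finsetSum _ fun i _ => (hint i).abs]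
  exact integral_mono (integrable_supPairing_comp hu hξ hint)
    (integrable_finsetSum _ fun i _ => (hint i).abs) fun ω => supPairing_le_sum_abs hu _

variable {n : ℕ} {u : τ → Fin n → ℝ} {ξ : Ω → Fin n → ℝ}

lemma integrable_supPairing_redistribute (hu : ∀ t i, |u t i| ≤ 1) (hξ : Measurable ξ)
    (hint : ∀ i, Integrable (fun ω => ξ ω i) μ) (i : Fin n) :
    Integrable (fun ω => supPairing u (redistribute i (ξ ω))) μ :=
  integrable_supPairing_comp hu ((continuous_redistribute i).measurable.comp hξ) fun j => by
    rcases eq_or_ne j i with rfl | hj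
    · simp
    · simp only [redistribute_of_ne hj]
      exact (hint j).add ((hint i).div_const _)

variable (hn : 2 ≤ n) (hu : ∀ t i, |u t i| ≤ 1) (hξ : Measurable ξ)
  (hint : ∀ i, Integrable (fun ω => ξ ω i) μ)
include hn hu hξ hint

lemma integral_supPairing_le_redistribute_add (i : Fin n) :
    ∫ ω, supPairing u (ξ ω) ∂μ
      ≤ ∫ ω, supPairing u (redistribute i (ξ ω)) ∂μ + 2 * ∫ ω, |ξ ω i| ∂μ := by
  have hred := integrable_supPairing_redistribute hu hξ hint i
  rw [← integral_const_mul, ← integral_add hred ((hint i).abs.const_mul 2)]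
  exact integral_mono (integrable_supPairing_comp hu hξ hint) (hred.add ((hint i).abs.const_mul 2))
    fun ω => supPairing_le_redistribute_add hn hu i (ξ ω)

lemma integral_supPairing_redistribute_le (hexch : Exchangeable μ ξ)
    (hsum : ∀ᵐ ω ∂μ, ∑ i, ξ ω i = 0) (i : Fin n) :
    ∫ ω, supPairing u (redistribute i (ξ ω)) ∂μ ≤ n / (n - 1) * ∫ ω, supPairing u (ξ ω) ∂μ := by
  have hswap : ∀ k, Integrable (fun ω => supPairing u fun j => ξ ω (Equiv.swap i k j)) μ :=
    fun k => integrable_supPairing_comp hu (by fun_prop) fun j => hint _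
  calc ∫ ω, supPairing u (redistribute i (ξ ω)) ∂μ
      ≤ ∫ ω, ((n : ℝ) - 1)⁻¹ * ∑ k, supPairing u (fun j => ξ ω (Equiv.swap i k j)) ∂μ :=
        integral_mono_ae (integrable_supPairing_redistribute hu hξ hint i)
          ((integrable_finsetSum _ fun k _ => hswap k).const_mul _)
          (hsum.mono fun ω hω => supPairing_redistribute_le_sum_swap hn hu hω i)
    _ = ((n : ℝ) - 1)⁻¹ * ∑ _k : Fin n, ∫ ω, supPairing u (ξ ω) ∂μ := by
        rw [integral_const_mul, integral_finsetSum _ fun k _ => hswap k]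
        congr 1
        exact sum_congr rfl fun k _ =>
          hexch.integral_comp_perm hξ _ (continuous_supPairing hu).measurable
    _ = n / (n - 1) * ∫ ω, supPairing u (ξ ω) ∂μ := by
        simp only [sum_const, card_univ, Fintype.card_fin, nsmul_eq_mul]
        ring

lemma mul_integral_supPairing_le_sum_redistribute (hsum : ∀ᵐ ω ∂μ, ∑ i, ξ ω i = 0) :
    (n : ℝ) * (n - 2) / (n - 1) * ∫ ω, supPairing u (ξ ω) ∂μ
      ≤ ∑ i, ∫ ω, supPairing u (redistribute i (ξ ω)) ∂μ := by
  have hred := integrable_supPairing_redistribute hu hξ hint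
  rw [← integral_const_mul, ← integral_finsetSum _ fun i _ => hred i]
  exact integral_mono_ae ((integrable_supPairing_comp hu hξ hint).const_mul _)
    (integrable_finsetSum _ fun i _ => hred i)
    (hsum.mono fun ω hω => mul_supPairing_le_sum_redistribute hn hu hω)

end integral

lemma two_le_of_sum_eq_zero {Ω : Type*} [MeasurableSpace Ω] {μ : Measure Ω} {n : ℕ}
    {ξ : Ω → Fin n → ℝ} (hsum : ∀ᵐ ω ∂μ, ∑ i, ξ ω i = 0) (i : Fin n)
    (hpos : 0 < ∫ ω, |ξ ω i| ∂μ) : 2 ≤ n := by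
  by_contra! h
  obtain rfl : n = 1 := by have := i.pos; omega
  refine hpos.ne' (integral_eq_zero_of_ae ?_)
  filter_upwards [hsum] with ω hω
  simpa [Subsingleton.elim i 0] using hω

lemma SelfBounding.of_forall_eq_zero {E : Type*} {n : ℕ} {a b : ℝ} (hb : 0 ≤ b)
    {f : (Fin n → E) → ℝ} (hf : ∀ x, f x = 0) : SelfBounding a b f :=
  ⟨fun _ _ => 0, fun _ _ _ _ => rfl, fun _ x => by simp [hf x], fun x => by simp [hf x, hb]⟩

lemma selfBounding_div_of_bounds {E : Type*} {n : ℕ} (hn : 2 ≤ n) {κ : ℝ} (hκ : 0 < κ)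
    {f : (Fin n → E) → ℝ} {g : Fin n → (Fin n → E) → ℝ}
    (hg : ∀ i x y, (∀ j, j ≠ i → x j = y j) → g i x = g i y)
    (hf_le : ∀ x, f x ≤ n * κ)
    (hf_le_g : ∀ i x, f x ≤ g i x + 2 * κ)
    (hg_le : ∀ i x, g i x ≤ n / (n - 1) * f x)
    (hf_le_sum : ∀ x, (n : ℝ) * (n - 2) / (n - 1) * f x ≤ ∑ i, g i x) :
    SelfBounding 2 0 fun x => f x / (κ * (3 - 2 / n)) := by
  have hn1 := sub_one_pos_of_two_le hn
  set c : ℝ := (n - 1) / n with hc_def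
  have hc : 0 ≤ c := by positivity
  have hc_mul : c * (n / (n - 1)) = 1 := by rw [hc_def]; field_simp
  have hc_mul' : c * ((n : ℝ) * (n - 2) / (n - 1)) = n - 2 := by rw [hc_def]; field_simp
  have hD : κ * (3 - 2 / n) = κ + 2 * c * κ := by rw [hc_def]; field_simp; ring
  have hDpos : 0 < κ * (3 - 2 / n) := by rw [hD]; positivity
  refine ⟨fun i x => c * g i x / (κ * (3 - 2 / n)),
    fun i x y hxy => by dsimp only; rw [hg i x y hxy], fun i x => ?_, fun x => ?_⟩
  · rw [← sub_div, div_le_one hDpos]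
    have hcg : c * g i x ≤ f x := calc
      c * g i x ≤ c * (n / (n - 1) * f x) := mul_le_mul_of_nonneg_left (hg_le i x) hc
      _ = f x := by rw [← mul_assoc, hc_mul, one_mul]
    have hcf : c * (f x - 2 * κ) ≤ c * g i x :=
      mul_le_mul_of_nonneg_left (by linarith [hf_le_g i x]) hc
    have hf : (1 - c) * f x ≤ κ := calc
      (1 - c) * f x ≤ (1 - c) * (n * κ) :=
        mul_le_mul_of_nonneg_left (hf_le x) (by rw [hc_def]; field_simp; linarith)
      _ = κ := by rw [hc_def]; field_simp; ring
    exact ⟨div_nonneg (sub_nonneg.2 hcg) hDpos.le, by rw [hD]; linarith⟩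
  · have hsum : (n - 2) * f x ≤ c * ∑ i, g i x := calc
      (n - 2) * f x = c * ((n : ℝ) * (n - 2) / (n - 1) * f x) := by rw [← mul_assoc, hc_mul']
      _ ≤ c * ∑ i, g i x := mul_le_mul_of_nonneg_left (hf_le_sum x) hc
    simp_rw [← sub_div]
    rw [← sum_div, add_zero, ← mul_div_assoc, div_le_div_iff_of_pos_right hDpos, sum_sub_distrib,
      ← mul_sum, sum_const, card_univ, Fintype.card_fin, nsmul_eq_mul]
    linarith

theorem selfBounding_bootstrap_conditional_expectation_general
    {E : Type*} [MeasurableSpace E] {n : ℕ} (hn : 0 < n)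
    (T : Set (E → ℝ))
    (hTrange : ∀ t ∈ T, ∀ e, t e ∈ Set.Icc (-1 : ℝ) 1)
    {Ω : Type*} [MeasurableSpace Ω] (μ : Measure Ω)
    (ξ : Ω → Fin n → ℝ) (hξmeas : Measurable ξ)
    (κ : ℝ) (hκ : κ = ∫ ω, |ξ ω ⟨0, hn⟩| ∂μ)
    (hξint : Integrable (fun ω => |ξ ω ⟨0, hn⟩|) μ)
    (hξexch : ∀ π : Equiv.Perm (Fin n),
      μ.map (fun ω => fun i => ξ ω (π i)) = μ.map ξ)
    (hξsum : ∀ᵐ ω ∂μ, ∑ i, ξ ω i = 0) :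
    SelfBounding 2 0 (fun x : Fin n → E =>
      (∫ ω, ⨆ t : T, ∑ i, ξ ω i * (t : E → ℝ) (x i) ∂μ) / (κ * (3 - 2 / (n : ℝ)))) := by
  -- `⨆` over an empty type and division by `0` both give `0`
  rcases isEmpty_or_nonempty T with hT | hT
  · exact SelfBounding.of_forall_eq_zero le_rfl fun x => by simp [Real.iSup_of_isEmpty]
  rcases (hκ ▸ integral_nonneg fun ω => abs_nonneg _ : 0 ≤ κ).eq_or_lt with rfl | hκpos
  · exact SelfBounding.of_forall_eq_zero le_rfl fun x => by simp
  have hn2 : 2 ≤ n := two_le_of_sum_eq_zero hξsum ⟨0, hn⟩ (hκ ▸ hκpos)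
  have hexch : Exchangeable μ ξ := hξexch
  have hint : ∀ i, Integrable (fun ω => ξ ω i) μ := fun i =>
    hexch.integrable_comp_apply hξmeas ⟨0, hn⟩ i measurable_id
      ((integrable_norm_iff (by fun_prop)).1 hξint)
  have habs : ∀ i, ∫ ω, |ξ ω i| ∂μ = κ := fun i =>
    hκ ▸ hexch.integral_comp_apply hξmeas ⟨0, hn⟩ i measurable_abs
  have hu : ∀ (x : Fin n → E) (t : T) i, |(t : E → ℝ) (x i)| ≤ 1 :=
    fun x t i => abs_le.2 (hTrange t t.2 (x i))
  refine selfBounding_div_of_bounds hn2 hκpos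
    (f := fun x => ∫ ω, supPairing (fun (t : T) j => (t : E → ℝ) (x j)) (ξ ω) ∂μ)
    (g := fun i x => ∫ ω, supPairing (fun (t : T) j => (t : E → ℝ) (x j)) (redistribute i (ξ ω)) ∂μ)
    (fun i x y hxy => integral_congr_ae (ae_of_all _ fun ω =>
      supPairing_congr redistribute_self fun t j hj => by rw [hxy j hj]))
    (fun x => ?_) (fun i x => ?_) (fun i x => ?_) (fun x => ?_)
  · simpa [habs] using integral_supPairing_le_sum_integral_abs (hu x) hξmeas hint
  · simpa [habs] using integral_supPairing_le_redistribute_add hn2 (hu x) hξmeas hint i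
  · exact integral_supPairing_redistribute_le hn2 (hu x) hξmeas hint hexch hξsum i
  · exact mul_integral_supPairing_le_sum_redistribute hn2 (hu x) hξmeas hint hξsum

/-- **Self-bounding property of the bootstrap conditional expectation** (Theorem 3.4).
Let `T` be a class of measurable `[-1,1]`-valued functions, separable in the product topology,
and let `ξ` be an exchangeable random vector with `κ = E|ξ₁| < ∞` and `∑ ξᵢ = 0` a.s.
Then `x ↦ ḡ(x) / (κ (3 − 2/n))` is `(2,0)`-self-bounding, where
`ḡ(x) = E[sup_{t ∈ T} ∑ ξᵢ t(xᵢ)]`. -/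
theorem selfBounding_bootstrap_conditional_expectation
    {E : Type*} [MeasurableSpace E] {n : ℕ} (hn : 0 < n)
    (T : Set (E → ℝ))
    (hTmeas : ∀ t ∈ T, Measurable t)
    (hTrange : ∀ t ∈ T, ∀ e, t e ∈ Set.Icc (-1 : ℝ) 1)
    (hTsep : TopologicalSpace.IsSeparable T)
    {Ω : Type*} [MeasurableSpace Ω] (μ : Measure Ω) [IsProbabilityMeasure μ]
    (ξ : Ω → Fin n → ℝ) (hξmeas : Measurable ξ)
    (κ : ℝ) (hκ : κ = ∫ ω, |ξ ω ⟨0, hn⟩| ∂μ)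
    (hξint : Integrable (fun ω => |ξ ω ⟨0, hn⟩|) μ)
    (hξexch : ∀ π : Equiv.Perm (Fin n),
      μ.map (fun ω => fun i => ξ ω (π i)) = μ.map ξ)
    (hξsum : ∀ᵐ ω ∂μ, ∑ i, ξ ω i = 0) :
    SelfBounding 2 0 (fun x : Fin n → E =>
      (∫ ω, ⨆ t : T, ∑ i, ξ ω i * (t : E → ℝ) (x i) ∂μ) / (κ * (3 - 2 / (n : ℝ)))) :=
  selfBounding_bootstrap_conditional_expectation_general hn T hTrange μ ξ hξmeas κ hκ hξint hξexch
    hξsum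
end

section
/- Let X and Y be two real random variables defined on a common probability space such that X e^X is integrable, Y e^X is integrable, and E[X e^X] ≤ E[Y e^X] < +∞. Then E[e^X] ≤ E[e^Y]. Moreover, if the inequality E[X e^X] < E[Y e^X] is strict, then E[e^X] < E[e^Y]. -/
/-!
The tangent line of `exp` at `x` gives `e^y ≥ e^x (1 + y - x)`. Taking `x = X`, `y = Y` and
integrating, `E[e^Y] ≥ E[e^X] + (E[Y e^X] - E[X e^X])`, which is at least (resp. greater than)
`E[e^X]` under the weak (resp. strict) hypothesis. Integrating in `ℝ≥0∞` on the right-hand side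
lets `E[e^Y]` be infinite without any case distinction.
-/

open MeasureTheory

namespace Real

theorem exp_le_exp_one_add_abs_mul_exp (x : ℝ) : exp x ≤ exp 1 + |x * exp x| := by
  rcases le_or_gt x 1 with hx | hx
  · have := abs_nonneg (x * exp x)
    linarith [exp_le_exp.mpr hx]
  · have : exp x ≤ x * exp x := le_mul_of_one_le_left (exp_pos x).le hx.le
    linarith [le_abs_self (x * exp x), exp_pos 1]

theorem add_one_sub_mul_exp_le_exp (x y : ℝ) : (1 + (y - x)) * exp x ≤ exp y :=
  calc (1 + (y - x)) * exp x ≤ exp (y - x) * exp x := by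
        gcongr
        linarith [add_one_le_exp (y - x)]
    _ = exp y := by rw [← exp_add, sub_add_cancel]

end Real

namespace MeasureTheory

variable {Ω : Type*} [MeasurableSpace Ω] {μ : Measure Ω}

theorem ofReal_integral_le_lintegral_ofReal {f : Ω → ℝ} (hf : Integrable f μ) :
    ENNReal.ofReal (∫ ω, f ω ∂μ) ≤ ∫⁻ ω, ENNReal.ofReal (f ω) ∂μ := by
  rw [integral_eq_lintegral_pos_part_sub_lintegral_neg_part hf]
  exact (ENNReal.ofReal_le_ofReal (sub_le_self _ ENNReal.toReal_nonneg)).trans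
    ENNReal.ofReal_toReal_le

theorem integrable_exp_of_integrable_mul_exp [IsFiniteMeasure μ] {X : Ω → ℝ}
    (hX : AEMeasurable X μ) (hXexp : Integrable (fun ω => X ω * Real.exp (X ω)) μ) :
    Integrable (fun ω => Real.exp (X ω)) μ := by
  refine ((integrable_const (Real.exp 1)).add hXexp.abs).mono'
    hX.exp.aestronglyMeasurable (ae_of_all _ fun ω => ?_)
  rw [Real.norm_of_nonneg (Real.exp_pos _).le]
  exact Real.exp_le_exp_one_add_abs_mul_exp (X ω)

theorem ofReal_integral_exp_add_sub_le_lintegral_exp [IsFiniteMeasure μ] {X Y : Ω → ℝ}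
    (hX : AEMeasurable X μ) (hXexp : Integrable (fun ω => X ω * Real.exp (X ω)) μ)
    (hYexp : Integrable (fun ω => Y ω * Real.exp (X ω)) μ) :
    ENNReal.ofReal (∫ ω, Real.exp (X ω) ∂μ +
        (∫ ω, Y ω * Real.exp (X ω) ∂μ - ∫ ω, X ω * Real.exp (X ω) ∂μ)) ≤
      ∫⁻ ω, ENNReal.ofReal (Real.exp (Y ω)) ∂μ := by
  have hexp := integrable_exp_of_integrable_mul_exp hX hXexp
  have hdiff : Integrable (fun ω => Y ω * Real.exp (X ω) - X ω * Real.exp (X ω)) μ :=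
    hYexp.sub hXexp
  have htangent : (fun ω => (1 + (Y ω - X ω)) * Real.exp (X ω)) =
      fun ω => Real.exp (X ω) + (Y ω * Real.exp (X ω) - X ω * Real.exp (X ω)) := by
    funext ω; ring
  calc ENNReal.ofReal (∫ ω, Real.exp (X ω) ∂μ +
          (∫ ω, Y ω * Real.exp (X ω) ∂μ - ∫ ω, X ω * Real.exp (X ω) ∂μ))
        = ENNReal.ofReal (∫ ω, (1 + (Y ω - X ω)) * Real.exp (X ω) ∂μ) := by
          rw [htangent, integral_add hexp hdiff, integral_sub hYexp hXexp]
    _ ≤ ∫⁻ ω, ENNReal.ofReal ((1 + (Y ω - X ω)) * Real.exp (X ω)) ∂μ :=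
          ofReal_integral_le_lintegral_ofReal (htangent ▸ hexp.add hdiff)
    _ ≤ ∫⁻ ω, ENNReal.ofReal (Real.exp (Y ω)) ∂μ :=
          lintegral_mono fun ω =>
            ENNReal.ofReal_le_ofReal (Real.add_one_sub_mul_exp_le_exp (X ω) (Y ω))

end MeasureTheory

theorem decoupling_inequality_general
    {Ω : Type*} [MeasurableSpace Ω] (μ : Measure Ω) [IsProbabilityMeasure μ]
    (X Y : Ω → ℝ) (hXmeas : Measurable X)
    (hXint : Integrable (fun ω => X ω * Real.exp (X ω)) μ)
    (hYint : Integrable (fun ω => Y ω * Real.exp (X ω)) μ)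
    (h : ∫ ω, X ω * Real.exp (X ω) ∂μ ≤ ∫ ω, Y ω * Real.exp (X ω) ∂μ) :
    (∫⁻ ω, ENNReal.ofReal (Real.exp (X ω)) ∂μ ≤ ∫⁻ ω, ENNReal.ofReal (Real.exp (Y ω)) ∂μ) ∧
      ((∫ ω, X ω * Real.exp (X ω) ∂μ < ∫ ω, Y ω * Real.exp (X ω) ∂μ) →
        ∫⁻ ω, ENNReal.ofReal (Real.exp (X ω)) ∂μ < ∫⁻ ω, ENNReal.ofReal (Real.exp (Y ω)) ∂μ) := by
  have hexp := integrable_exp_of_integrable_mul_exp hXmeas.aemeasurable hXint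
  have hexp_pos : 0 < ∫ ω, Real.exp (X ω) ∂μ := integral_exp_pos hexp
  have hlintegral_exp : ∫⁻ ω, ENNReal.ofReal (Real.exp (X ω)) ∂μ =
      ENNReal.ofReal (∫ ω, Real.exp (X ω) ∂μ) :=
    (ofReal_integral_eq_lintegral_ofReal hexp (ae_of_all _ fun ω => (Real.exp_pos _).le)).symm
  have hbound := ofReal_integral_exp_add_sub_le_lintegral_exp hXmeas.aemeasurable hXint hYint
  rw [hlintegral_exp]
  refine ⟨le_trans ?_ hbound, fun hlt => lt_of_lt_of_le ?_ hbound⟩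
  · exact ENNReal.ofReal_le_ofReal (by linarith)
  · exact (ENNReal.ofReal_lt_ofReal_iff (by linarith)).mpr (by linarith)

/-- **Decoupling inequality for exponential moments** (Lemma `theorem duality entropy`).
If `E[X e^X] ≤ E[Y e^X] < ∞` then `E[e^X] ≤ E[e^Y]` (where `E[e^Y]` may be infinite,
hence the use of the Lebesgue integral of `ENNReal.ofReal (exp ∘ Y)`); moreover the
conclusion is strict if the hypothesis is strict. -/
theorem decoupling_inequality
    {Ω : Type*} [MeasurableSpace Ω] (μ : Measure Ω) [IsProbabilityMeasure μ]
    (X Y : Ω → ℝ) (hXmeas : Measurable X) (hYmeas : Measurable Y)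
    (hXint : Integrable (fun ω => X ω * Real.exp (X ω)) μ)
    (hYint : Integrable (fun ω => Y ω * Real.exp (X ω)) μ)
    (h : ∫ ω, X ω * Real.exp (X ω) ∂μ ≤ ∫ ω, Y ω * Real.exp (X ω) ∂μ) :
    (∫⁻ ω, ENNReal.ofReal (Real.exp (X ω)) ∂μ ≤ ∫⁻ ω, ENNReal.ofReal (Real.exp (Y ω)) ∂μ) ∧
      ((∫ ω, X ω * Real.exp (X ω) ∂μ < ∫ ω, Y ω * Real.exp (X ω) ∂μ) →
        ∫⁻ ω, ENNReal.ofReal (Real.exp (X ω)) ∂μ < ∫⁻ ω, ENNReal.ofReal (Real.exp (Y ω)) ∂μ) :=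
  decoupling_inequality_general μ X Y hXmeas hXint hYint h
end

section
/- Let Z be a nonnegative real random variable with E[Z log Z] < +∞ (with the convention 0 log 0 = 0). Define the entropy Ent(Z) = E[Z log Z] − E[Z] log(E[Z]) (set to 0 if E[Z] = 0). Then Ent(Z) = sup { E[Z U] : U a real random variable on the same probability space with E[e^U] = 1 }. -/
open MeasureTheory Filter

private lemma young_ineq_aux {m x u : ℝ} (hm : 0 < m) (hx : 0 ≤ x) :
    x * u ≤ x * Real.log x - x * Real.log m - x + m * Real.exp u := by
  rcases eq_or_lt_of_le hx with h0 | hx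
  · simp [← h0]; positivity
  · have hxm : 0 < x / m := div_pos hx hm
    have h1 : (u - Real.log (x / m)) + 1 ≤ Real.exp (u - Real.log (x / m)) :=
      Real.add_one_le_exp _
    have h2 : Real.exp (u - Real.log (x / m)) = Real.exp u * m / x := by
      rw [Real.exp_sub, Real.exp_log hxm]; field_simp
    rw [h2] at h1
    have h3 : x * ((u - Real.log (x / m)) + 1) ≤ x * (Real.exp u * m / x) :=
      mul_le_mul_of_nonneg_left h1 hx.le
    have h4 : x * (Real.exp u * m / x) = m * Real.exp u := by field_simp
    rw [h4] at h3
    have h5 : Real.log (x / m) = Real.log x - Real.log m :=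
      Real.log_div (ne_of_gt hx) (ne_of_gt hm)
    nlinarith [h3]

private lemma log_max_bound_aux {z a : ℝ} (hz : 0 ≤ z) (ha : 0 < a) (ha1 : a ≤ 1) :
    |z * Real.log (max z a)| ≤ |z * Real.log z| + 1 := by
  rcases le_or_gt a z with h | h
  · rw [max_eq_left h]
    linarith [le_abs_self (z * Real.log z), abs_nonneg (z * Real.log z)]
  · rw [max_eq_right h.le]
    have hla : Real.log a ≤ 0 := Real.log_nonpos ha.le ha1
    have h1 : |z * Real.log a| = z * (-Real.log a) := by
      rw [abs_mul, abs_of_nonneg hz, abs_of_nonpos hla]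
    have h2 : -Real.log a = Real.log (1/a) := by
      rw [Real.log_div one_ne_zero (ne_of_gt ha), Real.log_one]; ring
    have h3 : Real.log (1/a) ≤ 1/a - 1 := Real.log_le_sub_one_of_pos (by positivity)
    have h4 : z * (-Real.log a) ≤ a * (-Real.log a) :=
      mul_le_mul_of_nonneg_right h.le (by linarith)
    have h5 : a * (-Real.log a) ≤ a * (1/a - 1) := by
      rw [h2]; exact mul_le_mul_of_nonneg_left h3 ha.le
    have h6 : a * (1/a - 1) = 1 - a := by field_simp
    nlinarith [abs_nonneg (z * Real.log z)]

/-- **Duality formula for the entropy.** For a nonnegative random variable `Z` with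
`E[Z log Z] < ∞` (with the convention `0 log 0 = 0`, which is Mathlib's convention for
`Real.log`), the entropy `Ent(Z) = E[Z log Z] − E[Z] log E[Z]` equals the supremum of
`E[Z U]` over all random variables `U` with `E[e^U] = 1`. -/
theorem entropy_duality
    {Ω : Type*} [MeasurableSpace Ω] (μ : Measure Ω) [IsProbabilityMeasure μ]
    (Z : Ω → ℝ) (hZmeas : Measurable Z) (hZnonneg : ∀ᵐ ω ∂μ, 0 ≤ Z ω)
    (hZlogint : Integrable (fun ω => Z ω * Real.log (Z ω)) μ) :
    (∫ ω, Z ω * Real.log (Z ω) ∂μ) - (∫ ω, Z ω ∂μ) * Real.log (∫ ω, Z ω ∂μ) =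
      sSup {r : ℝ | ∃ U : Ω → ℝ, Measurable U ∧
        Integrable (fun ω => Real.exp (U ω)) μ ∧ (∫ ω, Real.exp (U ω) ∂μ) = 1 ∧
        Integrable (fun ω => Z ω * U ω) μ ∧ r = ∫ ω, Z ω * U ω ∂μ} := by
  -- `Z` is integrable
  have hZint : Integrable Z μ := by
    have hg : Integrable (fun ω => Real.exp 1 + |Z ω * Real.log (Z ω)|) μ :=
      (integrable_const _).add hZlogint.abs
    refine hg.mono (hZmeas.aestronglyMeasurable) ?_
    filter_upwards [hZnonneg] with ω hω
    rw [Real.norm_eq_abs, Real.norm_eq_abs, abs_of_nonneg hω]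
    have h2 : (0:ℝ) ≤ Real.exp 1 + |Z ω * Real.log (Z ω)| := by positivity
    rw [abs_of_nonneg h2]
    rcases le_or_gt (Z ω) (Real.exp 1) with h | h
    · nlinarith [abs_nonneg (Z ω * Real.log (Z ω))]
    · have h1 : 1 ≤ Real.log (Z ω) := by
        rw [← Real.log_exp 1]
        exact Real.log_le_log (Real.exp_pos 1) h.le
      have := le_abs_self (Z ω * Real.log (Z ω))
      nlinarith [Real.exp_pos 1]
  set S : Set ℝ := {r : ℝ | ∃ U : Ω → ℝ, Measurable U ∧
      Integrable (fun ω => Real.exp (U ω)) μ ∧ (∫ ω, Real.exp (U ω) ∂μ) = 1 ∧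
      Integrable (fun ω => Z ω * U ω) μ ∧ r = ∫ ω, Z ω * U ω ∂μ} with hSdef
  -- `0 ∈ S` via `U = 0`
  have hzero_mem : (0:ℝ) ∈ S := by
    refine ⟨fun _ => 0, measurable_const, by simpa using integrable_const (1:ℝ),
      by simp, by simpa using (integrable_const (0:ℝ)), by simp⟩
  set m := ∫ ω, Z ω ∂μ with hmdef
  have hm_nonneg : 0 ≤ m := integral_nonneg_of_ae hZnonneg
  rcases eq_or_lt_of_le hm_nonneg with hm0 | hm
  · -- degenerate case `m = 0` : `Z = 0` a.e. and `S = {0}`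
    have hZ0 : Z =ᵐ[μ] 0 :=
      (integral_eq_zero_iff_of_nonneg_ae hZnonneg hZint).mp hm0.symm
    have hZlog0 : (∫ ω, Z ω * Real.log (Z ω) ∂μ) = 0 := by
      rw [integral_congr_ae (g := fun _ => (0:ℝ))
        (by filter_upwards [hZ0] with ω hω; simp [hω]), integral_zero]
    have hSeq : S = {0} := by
      apply Set.eq_singleton_iff_unique_mem.mpr
      refine ⟨hzero_mem, ?_⟩
      rintro r ⟨U, -, -, -, -, hr⟩
      rw [hr, integral_congr_ae (g := fun _ => (0:ℝ))
        (by filter_upwards [hZ0] with ω hω; simp [hω]), integral_zero]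
    rw [hSeq, csSup_singleton, hZlog0, ← hm0]
    simp
  · -- main case `m > 0`
    -- upper bound: every element of `S` is at most the entropy
    have hub : ∀ r ∈ S, r ≤ (∫ ω, Z ω * Real.log (Z ω) ∂μ) - m * Real.log m := by
      rintro r ⟨U, hUmeas, hexpint, hexp1, hZUint, hr⟩
      have hRHSint : Integrable
          (fun ω => Z ω * Real.log (Z ω) - Z ω * Real.log m - Z ω + m * Real.exp (U ω)) μ :=
        ((hZlogint.sub (hZint.mul_const _)).sub hZint).add (hexpint.const_mul m)
      have hle : ∀ᵐ ω ∂μ, Z ω * U ω ≤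
          Z ω * Real.log (Z ω) - Z ω * Real.log m - Z ω + m * Real.exp (U ω) := by
        filter_upwards [hZnonneg] with ω hω
        exact young_ineq_aux hm hω
      have h1 : Integrable (fun ω => Z ω * Real.log (Z ω) - Z ω * Real.log m - Z ω) μ := by
        exact (hZlogint.sub (hZint.mul_const _)).sub hZint
      have h2 : Integrable (fun ω => m * Real.exp (U ω)) μ := by exact hexpint.const_mul m
      have h3 : Integrable (fun ω => Z ω * Real.log (Z ω) - Z ω * Real.log m) μ := by
        exact hZlogint.sub (hZint.mul_const _)
      have h4 : Integrable (fun ω => Z ω * Real.log m) μ := by exact hZint.mul_const _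
      have h := integral_mono_ae hZUint hRHSint hle
      rw [hr]
      calc (∫ ω, Z ω * U ω ∂μ)
          ≤ ∫ ω, (Z ω * Real.log (Z ω) - Z ω * Real.log m - Z ω + m * Real.exp (U ω)) ∂μ := h
        _ = (∫ ω, Z ω * Real.log (Z ω) ∂μ) - m * Real.log m - m + m * 1 := by
            rw [integral_add h1 h2, integral_sub h3 hZint, integral_sub hZlogint h4,
              integral_mul_const, integral_const_mul, hexp1, ← hmdef]
        _ = (∫ ω, Z ω * Real.log (Z ω) ∂μ) - m * Real.log m := by ring
    have hbdd : BddAbove S := ⟨_, hub⟩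
    -- lower bound via the approximating sequence `Uₙ = log (max Z (1/(n+1)) / cₙ)`
    have hlb : (∫ ω, Z ω * Real.log (Z ω) ∂μ) - m * Real.log m ≤ sSup S := by
      set a : ℕ → ℝ := fun n => 1 / (n + 1) with hadef
      have ha_pos : ∀ n, 0 < a n := fun n => by positivity
      have ha_le1 : ∀ n, a n ≤ 1 := fun n => by
        rw [hadef]; rw [div_le_one (by positivity)]; linarith [Nat.cast_nonneg (α := ℝ) n]
      have ha_to0 : Tendsto a atTop (nhds 0) := tendsto_one_div_add_atTop_nhds_zero_nat
      set W : ℕ → Ω → ℝ := fun n ω => max (Z ω) (a n) with hWdef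
      have hWpos : ∀ n ω, 0 < W n ω := fun n ω => lt_of_lt_of_le (ha_pos n) (le_max_right _ _)
      have hWmeas : ∀ n, Measurable (W n) := fun n => hZmeas.max measurable_const
      have hWbound : ∀ n, ∀ᵐ ω ∂μ, ‖W n ω‖ ≤ |Z ω| + 1 := by
        intro n
        filter_upwards with ω
        rw [Real.norm_eq_abs, abs_of_pos (hWpos n ω)]
        exact max_le (le_trans (le_abs_self _) (by linarith))
          (by linarith [ha_le1 n, abs_nonneg (Z ω)])
      have hWint : ∀ n, Integrable (W n) μ := fun n =>
        (hZint.abs.add (integrable_const 1)).mono (hWmeas n).aestronglyMeasurable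
          (by filter_upwards [hWbound n] with ω h;
              simpa [Real.norm_eq_abs, abs_of_nonneg (by positivity : (0:ℝ) ≤ |Z ω| + 1)] using h)
      set c : ℕ → ℝ := fun n => ∫ ω, W n ω ∂μ with hcdef
      have hc_pos : ∀ n, 0 < c n := by
        intro n
        have : (a n) * (μ Set.univ).toReal ≤ c n := by
          have := integral_mono (integrable_const (a n)) (hWint n)
            (fun ω => le_max_right _ _)
          simpa [integral_const, smul_eq_mul, mul_comm] using this
        simpa [measure_univ] using lt_of_lt_of_le (by simpa [measure_univ] using
          (by simpa [measure_univ] using (ha_pos n) : (0:ℝ) < a n * (μ Set.univ).toReal)) this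
      set U : ℕ → Ω → ℝ := fun n ω => Real.log (W n ω) - Real.log (c n) with hUdef
      have hUmeas : ∀ n, Measurable (U n) :=
        fun n => (Real.measurable_log.comp (hWmeas n)).sub measurable_const
      have hexpU : ∀ n ω, Real.exp (U n ω) = W n ω / c n := by
        intro n ω
        rw [hUdef]
        simp only []
        rw [Real.exp_sub, Real.exp_log (hWpos n ω), Real.exp_log (hc_pos n)]
      have hexpint : ∀ n, Integrable (fun ω => Real.exp (U n ω)) μ := by
        intro n
        have : Integrable (fun ω => W n ω / c n) μ := (hWint n).div_const _
        exact this.congr (by filter_upwards with ω; rw [hexpU n ω])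
      have hexp1 : ∀ n, (∫ ω, Real.exp (U n ω) ∂μ) = 1 := by
        intro n
        rw [integral_congr_ae (g := fun ω => W n ω / c n)
          (by filter_upwards with ω; rw [hexpU n ω]), integral_div]
        exact div_self (ne_of_gt (hc_pos n))
      have hZlogWint : ∀ n, Integrable (fun ω => Z ω * Real.log (W n ω)) μ := by
        intro n
        refine (hZlogint.abs.add (integrable_const 1)).mono
          ((hZmeas.mul (Real.measurable_log.comp (hWmeas n))).aestronglyMeasurable) ?_
        filter_upwards [hZnonneg] with ω hω
        have := log_max_bound_aux hω (ha_pos n) (ha_le1 n)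
        simp only [Pi.add_apply, Real.norm_eq_abs,
          abs_of_nonneg (show (0:ℝ) ≤ |Z ω * Real.log (Z ω)| + 1 by positivity)]
        exact this
      have hZUint : ∀ n, Integrable (fun ω => Z ω * U n ω) μ := by
        intro n
        have : Integrable (fun ω => Z ω * Real.log (W n ω) - Z ω * Real.log (c n)) μ :=
          (hZlogWint n).sub (hZint.mul_const _)
        exact this.congr (by filter_upwards with ω; rw [hUdef]; ring)
      have hval : ∀ n, (∫ ω, Z ω * U n ω ∂μ) =
          (∫ ω, Z ω * Real.log (W n ω) ∂μ) - m * Real.log (c n) := by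
        intro n
        rw [integral_congr_ae (g := fun ω => Z ω * Real.log (W n ω) - Z ω * Real.log (c n))
          (by filter_upwards with ω; rw [hUdef]; ring),
          integral_sub (hZlogWint n) (hZint.mul_const _), integral_mul_const, ← hmdef]
      have hmem : ∀ n, ((∫ ω, Z ω * Real.log (W n ω) ∂μ) - m * Real.log (c n)) ∈ S := by
        intro n
        rw [← hval n]
        exact ⟨U n, hUmeas n, hexpint n, hexp1 n, hZUint n, rfl⟩
      have T1 : Tendsto (fun n => ∫ ω, Z ω * Real.log (W n ω) ∂μ) atTop
          (nhds (∫ ω, Z ω * Real.log (Z ω) ∂μ)) := by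
        refine tendsto_integral_of_dominated_convergence (fun ω => |Z ω * Real.log (Z ω)| + 1)
          (fun n => (hZmeas.mul (Real.measurable_log.comp (hWmeas n))).aestronglyMeasurable)
          (hZlogint.abs.add (integrable_const 1)) ?_ ?_
        · intro n
          filter_upwards [hZnonneg] with ω hω
          rw [Real.norm_eq_abs]
          exact log_max_bound_aux hω (ha_pos n) (ha_le1 n)
        · filter_upwards [hZnonneg] with ω hω
          rcases eq_or_lt_of_le hω with h0 | h0
          · have : (fun n => Z ω * Real.log (W n ω)) = fun _ => Z ω * Real.log (Z ω) := by
              funext n; rw [← h0]; ring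
            rw [this]; exact tendsto_const_nhds
          · have hev : ∀ᶠ n in atTop, Z ω * Real.log (W n ω) = Z ω * Real.log (Z ω) := by
              filter_upwards [ha_to0.eventually (eventually_le_nhds h0)] with n hn
              rw [hWdef]; simp only []
              rw [max_eq_left hn]
            exact Tendsto.congr' (hev.mono fun n h => h.symm) tendsto_const_nhds
      have T2 : Tendsto c atTop (nhds m) := by
        refine tendsto_integral_of_dominated_convergence (fun ω => |Z ω| + 1)
          (fun n => (hWmeas n).aestronglyMeasurable)
          (hZint.abs.add (integrable_const 1)) hWbound ?_
        filter_upwards [hZnonneg] with ω hω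
        have : Tendsto (fun n => max (Z ω) (a n)) atTop (nhds (max (Z ω) 0)) :=
          tendsto_const_nhds.max ha_to0
        rwa [max_eq_left hω] at this
      have T3 : Tendsto (fun n => Real.log (c n)) atTop (nhds (Real.log m)) :=
        (Real.continuousAt_log (ne_of_gt hm)).tendsto.comp T2
      have T4 : Tendsto (fun n => (∫ ω, Z ω * Real.log (W n ω) ∂μ) - m * Real.log (c n)) atTop
          (nhds ((∫ ω, Z ω * Real.log (Z ω) ∂μ) - m * Real.log m)) :=
        T1.sub (T3.const_mul m)
      exact le_of_tendsto T4 (Eventually.of_forall fun n => le_csSup hbdd (hmem n))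
    exact le_antisymm hlb (csSup_le ⟨0, hzero_mem⟩ hub)
end

section
/- Let T be a set of measurable functions from a measurable space E to ℝ such that for each x ∈ E^n the set {(t(x_1),…,t(x_n)) : t ∈ T} is bounded. Let w ∈ ℝ^n, let a = min_i w_i and b = max_i w_i, and for x ∈ E^n define g_x(π) = sup_{t∈T} Σ_{i=1}^n w_{π(i)} t(x_i) for π in the symmetric group S_n. Let σ be a uniform random permutation and V_+(g_x,σ) = (1/n²) Σ_{i=1}^n Σ_{j=1}^n (g_x(σ) − g_x(σ τ_{i,j}))_+². Then almost surely V_+(g_x,σ) ≤ (2/n) (b−a)² v_+(x), where v_+(x) = sup_{t∈T} Σ_{i=1}^n ( t(x_i) − (1/n) Σ_{j=1}^n t(x_j) )². If in addition every function in T takes values in [−1,1], then almost surely V_+(g_x,σ) ≤ (8/n) ‖w‖², where ‖w‖ is the Euclidean norm of w. -/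
/-!
Fix `σ` and `t ∈ T`, and put `u = t ∘ x`. Composing `σ` with `τ_{i,j}` lowers the objective
`∑ₖ w (σ k) u k` of `t` by exactly `(w (σ i) - w (σ j)) (u i - u j)`, and `g(σ τ_{i,j})` is at least
the lowered value; so if `t` were optimal for `σ`, then `(g(σ) - g(σ τ_{i,j}))₊` would be at most
`|w (σ i) - w (σ j)| |u i - u j|`. As the sup need not be attained, one passes to the sup through
the continuous monotone map `s ↦ ∑_{i,j} (s - g(σ τ_{i,j}))₊²`. Summing over `i, j` and using
`∑_{i,j} (u i - u j)² = 2n ∑ᵢ (u i - ū)²` gives the first bound; bounding `|u i - u j| ≤ 2` and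
`∑_{i,j} (w i - w j)² ≤ 2n ‖w‖²` instead gives the second.
-/

open Finset

section PairwiseDifferences

variable {ι : Type*} [Fintype ι]

theorem sum_comp_swap_mul {R : Type*} [CommRing R] [DecidableEq ι] (c u : ι → R) (i j : ι) :
    ∑ k, c (Equiv.swap i j k) * u k = ∑ k, c k * u k - (c i - c j) * (u i - u j) := by
  rcases eq_or_ne i j with rfl | hij
  · simp
  have hdiff : ∑ k, (c (Equiv.swap i j k) - c k) * u k = (c j - c i) * u i + (c i - c j) * u j := by
    rw [Fintype.sum_eq_add i j hij fun k hk => by simp [Equiv.swap_apply_of_ne_of_ne hk.1 hk.2]]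
    simp
  simp only [sub_mul, sum_sub_distrib] at hdiff
  linear_combination hdiff

theorem sum_sum_sub_sq {R : Type*} [CommRing R] (v : ι → R) :
    ∑ i, ∑ j, (v i - v j) ^ 2 = 2 * Fintype.card ι * ∑ i, v i ^ 2 - 2 * (∑ i, v i) ^ 2 := by
  simp only [sub_sq, sum_add_distrib, sum_sub_distrib, sum_const, card_univ, nsmul_eq_mul,
    mul_assoc, ← mul_sum, sq (∑ i, v i), sum_mul_sum]
  ring

theorem sum_sum_sub_sq_le {R : Type*} [CommRing R] [LinearOrder R] [IsStrictOrderedRing R]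
    (v : ι → R) : ∑ i, ∑ j, (v i - v j) ^ 2 ≤ 2 * Fintype.card ι * ∑ i, v i ^ 2 := by
  rw [sum_sum_sub_sq]
  linarith [sq_nonneg (∑ i, v i)]

theorem sum_sum_sub_sq_eq_centered {K : Type*} [Field K] [CharZero K] (v : ι → K) :
    ∑ i, ∑ j, (v i - v j) ^ 2
      = 2 * Fintype.card ι * ∑ i, (v i - 1 / (Fintype.card ι : K) * ∑ j, v j) ^ 2 := by
  rcases isEmpty_or_nonempty ι with hι | hι
  · simp
  have hcard : (Fintype.card ι : K) ≠ 0 := Nat.cast_ne_zero.2 Fintype.card_ne_zero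
  simp only [sub_sq, sum_add_distrib, sum_sub_distrib, sum_const, card_univ,
    nsmul_eq_mul, ← sum_mul, ← mul_sum]
  field_simp
  ring

end PairwiseDifferences

theorem bddAbove_range_comp_of_isBounded {ι X : Type*} [PseudoMetricSpace X] [ProperSpace X]
    {u : ι → X} (hu : Bornology.IsBounded (Set.range u)) {f : X → ℝ} (hf : Continuous f) :
    BddAbove (Set.range (f ∘ u)) :=
  (hu.isCompact_closure.bddAbove_image hf.continuousOn).mono <| by
    rw [Set.range_comp]; exact Set.image_mono subset_closure

theorem sq_max_zero_le_sq {a b : ℝ} (h : a ≤ b) : max a 0 ^ 2 ≤ b ^ 2 := by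
  rw [← sq_abs b]
  exact pow_le_pow_left₀ (le_max_right _ _) (max_le (h.trans (le_abs_self b)) (abs_nonneg b)) 2

section PermSup

variable {α ι : Type*} [Fintype α] [DecidableEq α]

noncomputable def permSup (w : α → ℝ) (u : ι → α → ℝ) (π : Equiv.Perm α) : ℝ :=
  ⨆ t, ∑ i, w (π i) * u t i

variable (w : α → ℝ) (u : ι → α → ℝ)

theorem sum_sum_sq_max_permSup_sub_swap_le
    (hbdd : ∀ π : Equiv.Perm α, BddAbove (Set.range fun t => ∑ i, w (π i) * u t i))
    (σ : Equiv.Perm α) {B : ℝ} (hB₀ : 0 ≤ B)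
    (hB : ∀ t, ∑ i, ∑ j, ((w (σ i) - w (σ j)) * (u t i - u t j)) ^ 2 ≤ B) :
    ∑ i, ∑ j, max (permSup w u σ - permSup w u (σ * Equiv.swap i j)) 0 ^ 2 ≤ B := by
  rcases isEmpty_or_nonempty ι with hι | hι
  · simpa [permSup, Real.iSup_of_isEmpty] using hB₀
  set φ : ℝ → ℝ := fun s => ∑ i, ∑ j, max (s - permSup w u (σ * Equiv.swap i j)) 0 ^ 2
  have hφ_mono : Monotone φ := fun s s' hss' =>
    sum_le_sum fun i _ => sum_le_sum fun j _ =>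
      pow_le_pow_left₀ (le_max_right _ _) (max_le_max_right 0 (sub_le_sub_right hss' _)) 2
  have hφ_cont : Continuous φ := by fun_prop
  change φ (⨆ t, ∑ i, w (σ i) * u t i) ≤ B
  rw [hφ_mono.map_ciSup_of_continuousAt hφ_cont.continuousAt (hbdd σ)]
  refine ciSup_le fun t => (sum_le_sum fun i _ => sum_le_sum fun j _ => ?_).trans (hB t)
  refine sq_max_zero_le_sq ?_
  have hswap : ∑ k, w ((σ * Equiv.swap i j) k) * u t k ≤ permSup w u (σ * Equiv.swap i j) :=
    le_ciSup (hbdd _) t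
  have hexchange := sum_comp_swap_mul (w ∘ σ) (u t) i j
  simp only [Function.comp_apply] at hexchange
  simp only [Equiv.Perm.mul_apply] at hswap
  linarith

theorem sum_sum_sq_max_permSup_sub_swap_le_variance
    (hbdd : ∀ π : Equiv.Perm α, BddAbove (Set.range fun t => ∑ i, w (π i) * u t i))
    (σ : Equiv.Perm α) {a b v : ℝ}
    (ha : ∀ i, a ≤ w i) (hb : ∀ i, w i ≤ b) (hv₀ : 0 ≤ v)
    (hv : ∀ t, ∑ i, (u t i - 1 / (Fintype.card α : ℝ) * ∑ j, u t j) ^ 2 ≤ v) :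
    ∑ i, ∑ j, max (permSup w u σ - permSup w u (σ * Equiv.swap i j)) 0 ^ 2
      ≤ 2 * Fintype.card α * ((b - a) ^ 2 * v) := by
  refine sum_sum_sq_max_permSup_sub_swap_le w u hbdd σ (by positivity) fun t => ?_
  have hw (i j : α) : (w i - w j) ^ 2 ≤ (b - a) ^ 2 :=
    sq_le_sq' (by linarith [ha i, hb j]) (by linarith [hb i, ha j])
  calc ∑ i, ∑ j, ((w (σ i) - w (σ j)) * (u t i - u t j)) ^ 2
      ≤ ∑ i, ∑ j, (b - a) ^ 2 * (u t i - u t j) ^ 2 := by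
        gcongr with i _ j _
        rw [mul_pow]
        exact mul_le_mul_of_nonneg_right (hw _ _) (sq_nonneg _)
    _ = (b - a) ^ 2 *
          (2 * Fintype.card α * ∑ i, (u t i - 1 / (Fintype.card α : ℝ) * ∑ j, u t j) ^ 2) := by
        rw [← sum_sum_sub_sq_eq_centered]
        simp only [mul_sum]
    _ ≤ 2 * Fintype.card α * ((b - a) ^ 2 * v) := by
        have hcoef : (0 : ℝ) ≤ (b - a) ^ 2 * (2 * Fintype.card α) := by positivity
        nlinarith [mul_le_mul_of_nonneg_left (hv t) hcoef]

theorem sum_sum_sq_max_permSup_sub_swap_le_sum_sq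
    (hbdd : ∀ π : Equiv.Perm α, BddAbove (Set.range fun t => ∑ i, w (π i) * u t i))
    (σ : Equiv.Perm α)
    (hu : ∀ t i, u t i ∈ Set.Icc (-1 : ℝ) 1) :
    ∑ i, ∑ j, max (permSup w u σ - permSup w u (σ * Equiv.swap i j)) 0 ^ 2
      ≤ 2 * Fintype.card α * (4 * ∑ i, w i ^ 2) := by
  refine sum_sum_sq_max_permSup_sub_swap_le w u hbdd σ (by positivity) fun t => ?_
  have hu_sub (i j : α) : (u t i - u t j) ^ 2 ≤ 2 ^ 2 :=
    sq_le_sq' (by linarith [(hu t i).1, (hu t j).2]) (by linarith [(hu t i).2, (hu t j).1])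
  calc ∑ i, ∑ j, ((w (σ i) - w (σ j)) * (u t i - u t j)) ^ 2
      ≤ ∑ i, ∑ j, 2 ^ 2 * (w (σ i) - w (σ j)) ^ 2 := by
        gcongr with i _ j _
        rw [mul_pow, mul_comm]
        exact mul_le_mul_of_nonneg_right (hu_sub i j) (sq_nonneg _)
    _ = 2 ^ 2 * ∑ i, ∑ j, (w i - w j) ^ 2 := by
        simp only [← mul_sum]
        rw [← Equiv.sum_comp σ (fun i => ∑ j, (w i - w j) ^ 2)]
        exact congrArg _ (sum_congr rfl fun i _ => Equiv.sum_comp σ fun j => (w (σ i) - w j) ^ 2)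
    _ ≤ 2 * Fintype.card α * (4 * ∑ i, w i ^ 2) := by
        linarith [sum_sum_sub_sq_le w]

end PermSup

theorem one_div_sq_mul_le_two_div_mul {n S K : ℝ} (h : S ≤ 2 * n * K) :
    1 / n ^ 2 * S ≤ 2 / n * K := by
  rcases eq_or_ne n 0 with rfl | hn
  · simp
  calc 1 / n ^ 2 * S ≤ 1 / n ^ 2 * (2 * n * K) := by gcongr
    _ = 2 / n * K := by field_simp

theorem Vplus_bound_general
    {E : Type*} {n : ℕ}
    (T : Set (E → ℝ))
    (x : Fin n → E)
    (hbdd : Bornology.IsBounded {v : Fin n → ℝ | ∃ t ∈ T, v = fun i => t (x i)})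
    (w : Fin n → ℝ) (a b : ℝ)
    (ha : IsLeast (Set.range w) a) (hb : IsGreatest (Set.range w) b)
    (gx : Equiv.Perm (Fin n) → ℝ)
    (hgx : ∀ π : Equiv.Perm (Fin n), gx π = ⨆ t : T, ∑ i, w (π i) * (t : E → ℝ) (x i))
    (vplus : ℝ)
    (hvplus : vplus = ⨆ t : T,
      ∑ i, ((t : E → ℝ) (x i) - (1 / (n : ℝ)) * ∑ j, (t : E → ℝ) (x j)) ^ 2) :
    (∀ σ : Equiv.Perm (Fin n),
      (1 / (n : ℝ) ^ 2) * ∑ i : Fin n, ∑ j : Fin n,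
          (max (gx σ - gx (σ * Equiv.swap i j)) 0) ^ 2 ≤
        (2 / (n : ℝ)) * (b - a) ^ 2 * vplus) ∧
    ((∀ t ∈ T, ∀ e, t e ∈ Set.Icc (-1 : ℝ) 1) →
      ∀ σ : Equiv.Perm (Fin n),
        (1 / (n : ℝ) ^ 2) * ∑ i : Fin n, ∑ j : Fin n,
            (max (gx σ - gx (σ * Equiv.swap i j)) 0) ^ 2 ≤
          (8 / (n : ℝ)) * ∑ i, (w i) ^ 2) := by
  set u : T → Fin n → ℝ := fun t i => (t : E → ℝ) (x i)
  obtain rfl : gx = permSup w u := funext hgx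
  have hu : Bornology.IsBounded (Set.range u) :=
    hbdd.subset (by rintro _ ⟨t, rfl⟩; exact ⟨t, t.2, rfl⟩)
  have hbddπ (π : Equiv.Perm (Fin n)) : BddAbove (Set.range fun t => ∑ i, w (π i) * u t i) :=
    bddAbove_range_comp_of_isBounded hu (f := fun v => ∑ i, w (π i) * v i) (by fun_prop)
  constructor
  · intro σ
    have hvt (t : T) : ∑ i, (u t i - 1 / n * ∑ j, u t j) ^ 2 ≤ vplus :=
      hvplus ▸ le_ciSup (bddAbove_range_comp_of_isBounded hu
        (f := fun v => ∑ i, (v i - 1 / n * ∑ j, v j) ^ 2) (by fun_prop)) t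
    have hv₀ : 0 ≤ vplus := hvplus ▸ Real.iSup_nonneg fun t => sum_nonneg fun i _ => sq_nonneg _
    have := sum_sum_sq_max_permSup_sub_swap_le_variance w u hbddπ σ
      (fun i => ha.2 ⟨i, rfl⟩) (fun i => hb.2 ⟨i, rfl⟩) hv₀ (by simpa using hvt)
    rw [mul_assoc]
    exact one_div_sq_mul_le_two_div_mul (by simpa using this)
  · intro hIcc σ
    have := sum_sum_sq_max_permSup_sub_swap_le_sum_sq w u hbddπ σ
      fun t i => hIcc t t.2 (x i)
    rw [show (8 : ℝ) / n = 2 / n * 4 by ring, mul_assoc]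
    exact one_div_sq_mul_le_two_div_mul (by simpa using this)

/-- **Bound on the variance proxy `V₊(g_x, σ)`** (Proposition 4.11). For any `x ∈ Eⁿ` and
weight vector `w` with minimum `a` and maximum `b`,
`V₊(g_x,σ) = n⁻² ∑_{i,j} (g_x(σ) − g_x(σ τ_{i,j}))₊² ≤ (2/n)(b−a)² v₊(x)` for every
permutation `σ`; if moreover every `t ∈ T` takes values in `[-1,1]`, then
`V₊(g_x,σ) ≤ (8/n) ‖w‖²`. -/
theorem Vplus_bound
    {E : Type*} [MeasurableSpace E] {n : ℕ}
    (T : Set (E → ℝ)) (hTmeas : ∀ t ∈ T, Measurable t)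
    (x : Fin n → E)
    (hbdd : Bornology.IsBounded {v : Fin n → ℝ | ∃ t ∈ T, v = fun i => t (x i)})
    (w : Fin n → ℝ) (a b : ℝ)
    (ha : IsLeast (Set.range w) a) (hb : IsGreatest (Set.range w) b)
    (gx : Equiv.Perm (Fin n) → ℝ)
    (hgx : ∀ π : Equiv.Perm (Fin n), gx π = ⨆ t : T, ∑ i, w (π i) * (t : E → ℝ) (x i))
    (vplus : ℝ)
    (hvplus : vplus = ⨆ t : T,
      ∑ i, ((t : E → ℝ) (x i) - (1 / (n : ℝ)) * ∑ j, (t : E → ℝ) (x j)) ^ 2) :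
    (∀ σ : Equiv.Perm (Fin n),
      (1 / (n : ℝ) ^ 2) * ∑ i : Fin n, ∑ j : Fin n,
          (max (gx σ - gx (σ * Equiv.swap i j)) 0) ^ 2 ≤
        (2 / (n : ℝ)) * (b - a) ^ 2 * vplus) ∧
    ((∀ t ∈ T, ∀ e, t e ∈ Set.Icc (-1 : ℝ) 1) →
      ∀ σ : Equiv.Perm (Fin n),
        (1 / (n : ℝ) ^ 2) * ∑ i : Fin n, ∑ j : Fin n,
            (max (gx σ - gx (σ * Equiv.swap i j)) 0) ^ 2 ≤
          (8 / (n : ℝ)) * ∑ i, (w i) ^ 2) :=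
  Vplus_bound_general T x hbdd w a b ha hb gx hgx vplus hvplus
end
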